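/- arXiv:2305.15848 — 11 statements merged into one kernel-verified Lean document; each statement's English description precedes it below -/
import Mathlib

section
/- Let (G,·,N,⋆,⊙) be a skew bracoid. For each g ∈ G, the map γ(g) : N → N defined by γ(g)(η) = (g ⊙ e_N)⁻¹ ⋆ (g ⊙ η) is an automorphism of the group (N,⋆). -/
/-- A skew bracoid structure: `(G,·)` and `(N,⋆)` are groups (written
multiplicatively) and `act` is a transitive action of `G` on `N` satisfying
the skew bracoid relation. -/
def IsSkewBracoid {G N : Type*} [Group G] [Group N] (act : G → N → N) : Prop :=
  (∀ η, act 1 η = η) ∧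
  (∀ g k η, act (g * k) η = act g (act k η)) ∧
  (∀ η μ : N, ∃ g, act g η = μ) ∧
  (∀ g η μ, act g (η * μ) = act g η * (act g 1)⁻¹ * act g μ)

/-- for each `g`, the map `η ↦ (g ⊙ e)⁻¹ ⋆ (g ⊙ η)` is an
automorphism of `(N,⋆)`. -/
theorem gamma_isAutomorphism {G N : Type*} [Group G] [Group N] [Finite G] [Finite N]
    (act : G → N → N) (h : IsSkewBracoid act) (g : G) :
    Function.Bijective (fun η : N => (act g 1)⁻¹ * act g η) ∧
    ∀ η μ : N, (act g 1)⁻¹ * act g (η * μ) =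
      ((act g 1)⁻¹ * act g η) * ((act g 1)⁻¹ * act g μ) := by
  obtain ⟨h1, h2, _, h4⟩ := h
  constructor
  · have hbij : Function.Bijective (act g) := by
      apply Function.bijective_iff_has_inverse.mpr
      exact ⟨act g⁻¹, fun η => by rw [← h2, inv_mul_cancel, h1],
        fun η => by rw [← h2, mul_inv_cancel, h1]⟩
    exact (Group.mulLeft_bijective _).comp hbij
  · intro η μ
    rw [h4]
    group
end

section
/- Let (G,·,N,⋆,⊙) be a skew bracoid. The map γ : G → Aut(N,⋆), where γ(g)(η) = (g ⊙ e_N)⁻¹ ⋆ (g ⊙ η), is a group homomorphism from (G,·) to Aut(N,⋆). -/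
/-- the γ-function `γ(g)(η) = (g ⊙ e)⁻¹ ⋆ (g ⊙ η)` is a group
homomorphism from `G` to `Aut(N,⋆)`: each `γ(g)` is an automorphism of `N`
and `γ(g·k) = γ(g) ∘ γ(k)`. -/
theorem gamma_isHomomorphism {G N : Type*} [Group G] [Group N] [Finite G] [Finite N]
    (act : G → N → N) (h : IsSkewBracoid act) :
    (∀ g : G, Function.Bijective (fun η : N => (act g 1)⁻¹ * act g η) ∧
      ∀ η μ : N, (act g 1)⁻¹ * act g (η * μ) =
        ((act g 1)⁻¹ * act g η) * ((act g 1)⁻¹ * act g μ)) ∧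
    ∀ (g k : G) (η : N),
      (act (g * k) 1)⁻¹ * act (g * k) η =
        (act g 1)⁻¹ * act g ((act k 1)⁻¹ * act k η) := by
  obtain ⟨h1, hmul, _, hrel⟩ := h
  have hinvact : ∀ (g : G) (η : N), act g⁻¹ (act g η) = η := by
    intro g η
    rw [← hmul, inv_mul_cancel, h1]
  have hinj : ∀ g : G, Function.Injective (act g) := by
    intro g a b hab
    have := congrArg (act g⁻¹) hab
    rwa [hinvact, hinvact] at this
  have hinv : ∀ (g : G) (a : N), act g a⁻¹ = act g 1 * (act g a)⁻¹ * act g 1 := by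
    intro g a
    have h2 := hrel g a a⁻¹
    rw [mul_inv_cancel] at h2
    calc act g a⁻¹ = (act g a * (act g 1)⁻¹)⁻¹ * (act g a * (act g 1)⁻¹ * act g a⁻¹) := by
          group
      _ = act g 1 * (act g a)⁻¹ * act g 1 := by rw [← h2]; group
  refine ⟨fun g => ⟨?_, fun η μ => by rw [hrel]; group⟩, fun g k η => ?_⟩
  · have : Function.Injective (fun η : N => (act g 1)⁻¹ * act g η) := by
      intro a b hab
      exact hinj g (by simpa using mul_left_cancel hab)
    exact Finite.injective_iff_bijective.mp this
  · rw [hmul, hmul, hrel, hinv]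
    group
end

section
/- Let (G,·,N,⋆,⊙) be a skew bracoid and let ⋆ᵒᵖ denote the opposite group operation on N, i.e. η ⋆ᵒᵖ μ = μ ⋆ η. Then (G,·,N,⋆ᵒᵖ,⊙) is also a skew bracoid. -/
/-- the opposite of a skew bracoid (replace `(N,⋆)` by the
opposite group `Nᵐᵒᵖ`) is again a skew bracoid. -/
theorem opposite_skewBracoid {G N : Type*} [Group G] [Group N] [Finite G] [Finite N]
    (act : G → N → N) (h : IsSkewBracoid act) :
    IsSkewBracoid (fun (g : G) (η : Nᵐᵒᵖ) => MulOpposite.op (act g η.unop)) := by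
  obtain ⟨h1, h2, h3, h4⟩ := h
  refine ⟨fun η => by simp [h1], fun g k η => by simp [h2], fun η μ => ?_, fun g η μ => ?_⟩
  · obtain ⟨g, hg⟩ := h3 η.unop μ.unop
    exact ⟨g, by simp [hg]⟩
  · apply MulOpposite.unop_injective
    simp only [MulOpposite.unop_op, MulOpposite.unop_mul, MulOpposite.unop_inv,
      MulOpposite.unop_one]
    have := h4 g μ.unop η.unop
    simpa [mul_assoc] using this
end

section
/- Let (B,⋆,·) be a skew brace and let A be a strong left ideal. Let (B/A,⋆) be the quotient of (B,⋆) by (A,⋆), and let ⊙ be the action of (B,·) on B/A by left translation of cosets, b ⊙ (cA) = (b·c)A. Then (B, ·, B/A, ⋆, ⊙) is a skew bracoid. -/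
/-- A second group structure `(m, e, i)` on a type `B`. -/
structure SkewBraceOps (B : Type*) where
  m : B → B → B
  e : B
  i : B → B
  assoc : ∀ a b c, m (m a b) c = m a (m b c)
  e_m : ∀ a, m e a = a
  m_e : ∀ a, m a e = a
  i_m : ∀ a, m (i a) a = e

/-- `(B,⋆,·)` is a skew brace. -/
def IsSkewBrace {B : Type*} [Group B] (S : SkewBraceOps B) : Prop :=
  ∀ a b c : B, S.m a (b * c) = S.m a b * a⁻¹ * S.m a c

/-- Skew bracoid with the group structure of `G` given explicitly by a
multiplication `gmul` and identity `gone`: `act` is a transitive action of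
`G` on the group `(N,⋆)` satisfying the skew bracoid relation. -/
def IsSkewBracoidP {G N : Type*} (gmul : G → G → G) (gone : G) [Group N]
    (act : G → N → N) : Prop :=
  (∀ η, act gone η = η) ∧
  (∀ g k η, act (gmul g k) η = act g (act k η)) ∧
  (∀ η μ : N, ∃ g, act g η = μ) ∧
  (∀ g η μ, act g (η * μ) = act g η * (act g 1)⁻¹ * act g μ)

/-- if `A` is a strong left ideal of a skew brace `(B,⋆,·)` then
`(B, ·, B/A, ⋆, ⊙)` is a skew bracoid, where `⊙` is left translation of
cosets: `b ⊙ (cA) = (b·c)A`. -/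
theorem quotient_skewBrace_is_skewBracoid {B : Type*} [Group B] (S : SkewBraceOps B)
    (hSB : IsSkewBrace S)
    (A : Subgroup B) [A.Normal]
    (hmul : ∀ a ∈ A, ∀ b ∈ A, S.m a b ∈ A)
    (hinv : ∀ a ∈ A, S.i a ∈ A)
    (hγ : ∀ b : B, (fun a => b⁻¹ * S.m b a) '' (A : Set B) = (A : Set B)) :
    ∃ act : B → B ⧸ A → B ⧸ A,
      (∀ b c : B, act b (QuotientGroup.mk c) = QuotientGroup.mk (S.m b c)) ∧
      IsSkewBracoidP S.m S.e act := by
  have hγ' : ∀ b : B, ∀ a ∈ A, b⁻¹ * S.m b a ∈ A := by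
    intro b a ha
    have h : b⁻¹ * S.m b a ∈ ((fun a => b⁻¹ * S.m b a) '' (A : Set B)) := ⟨a, ha, rfl⟩
    rwa [hγ b] at h
  have hg1 : ∀ g : B, S.m g 1 = g := by
    intro g
    have h := hSB g 1 1
    rw [one_mul] at h
    have h2 : g⁻¹ * S.m g 1 = 1 := by
      have h3 : S.m g 1 * (g⁻¹ * S.m g 1) = S.m g 1 * 1 := by
        rw [← mul_assoc, ← h, mul_one]
      exact mul_left_cancel h3
    have h4 : S.m g 1 = g * (g⁻¹ * S.m g 1) := by group
    rw [h2, mul_one] at h4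
    exact h4
  have hwd : ∀ b : B, ∀ c c' : B, (QuotientGroup.leftRel A).r c c' →
      (QuotientGroup.leftRel A).r (S.m b c) (S.m b c') := by
    intro b c c' h
    rw [QuotientGroup.leftRel_apply] at h ⊢
    obtain ⟨a, ha, rfl⟩ : ∃ a ∈ A, c' = c * a := ⟨c⁻¹ * c', h, by group⟩
    rw [hSB b c a]
    have h5 : (S.m b c)⁻¹ * (S.m b c * b⁻¹ * S.m b a) = b⁻¹ * S.m b a := by group
    rw [h5]
    exact hγ' b a ha
  refine ⟨fun b => Quotient.map' (S.m b) (hwd b), fun b c => rfl, ?_, ?_, ?_, ?_⟩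
  · intro η
    obtain ⟨c, rfl⟩ := QuotientGroup.mk_surjective η
    show QuotientGroup.mk (S.m S.e c) = QuotientGroup.mk c
    rw [S.e_m]
  · intro g k η
    obtain ⟨c, rfl⟩ := QuotientGroup.mk_surjective η
    show QuotientGroup.mk (S.m (S.m g k) c) = QuotientGroup.mk (S.m g (S.m k c))
    rw [S.assoc]
  · intro η μ
    obtain ⟨c, rfl⟩ := QuotientGroup.mk_surjective η
    obtain ⟨d, rfl⟩ := QuotientGroup.mk_surjective μ
    refine ⟨S.m d (S.i c), ?_⟩
    show QuotientGroup.mk (S.m (S.m d (S.i c)) c) = QuotientGroup.mk d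
    rw [S.assoc, S.i_m, S.m_e]
  · intro g η μ
    obtain ⟨c, rfl⟩ := QuotientGroup.mk_surjective η
    obtain ⟨d, rfl⟩ := QuotientGroup.mk_surjective μ
    have hact : ∀ b x : B, Quotient.map' (S.m b) (hwd b) (QuotientGroup.mk x)
        = QuotientGroup.mk (S.m b x) := fun _ _ => rfl
    have h1 : ((1 : B ⧸ A)) = QuotientGroup.mk (1 : B) := rfl
    beta_reduce
    rw [← QuotientGroup.mk_mul, hact, hact, hact, h1, hact, ← QuotientGroup.mk_inv,
      ← QuotientGroup.mk_mul, ← QuotientGroup.mk_mul, hSB g c d, hg1]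
end

section
/- Let (N,⋆) be a group, γ : G → Aut(N,⋆) a group homomorphism, and π : G → N a surjective 1-cocycle, i.e. π(gh) = π(g) ⋆ γ(g)(π(h)) for all g, h ∈ G. Define g ⊙ η = π(g) ⋆ γ(g)(η). Then ⊙ is a transitive action of G on N and (G,·,N,⋆,⊙) is a skew bracoid. -/
/-- given a homomorphism `γ : G → Aut(N)` and a surjective
1-cocycle `π : G ↠ N`, the rule `g ⊙ η = π(g) ⋆ γ(g)(η)` makes
`(G,·,N,⋆,⊙)` a skew bracoid. -/
theorem cocycle_gives_skewBracoid {G N : Type*} [Group G] [Group N]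
    (γ : G →* MulAut N) (π : G → N)
    (hsurj : Function.Surjective π)
    (hcoc : ∀ g k : G, π (g * k) = π g * γ g (π k)) :
    IsSkewBracoid (fun (g : G) (η : N) => π g * γ g η) := by
  have hone : π 1 = 1 := by
    have := hcoc 1 1
    simp at this
    exact this
  refine ⟨?_, ?_, ?_, ?_⟩
  · intro η; simp [hone]
  · intro g k η; simp [hcoc, mul_assoc]
  · intro η μ
    obtain ⟨k, hk⟩ := hsurj η
    obtain ⟨h, hh⟩ := hsurj μ
    refine ⟨h * k⁻¹, ?_⟩
    have : π ((h * k⁻¹) * k) = π (h * k⁻¹) * γ (h * k⁻¹) (π k) := hcoc _ _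
    simpa [hk, hh] using this.symm
  · intro g η μ; simp [mul_assoc]
end

section
/- Let (G,·,N,⋆,⊙) be a skew bracoid, let K be the kernel of the permutation representation λ_⊙ : G → Perm(N), and let Ḡ = G/K. Then Ḡ acts on N via (gK) ⊙ η = g ⊙ η, this action is well defined and faithful, and (Ḡ, N) is a skew bracoid (called the reduced form). -/
/-- The kernel of the permutation representation of an action of `G` on `N`. -/
def actKer {G N : Type*} [Group G] (act : G → N → N)
    (h1 : ∀ η, act 1 η = η)
    (hm : ∀ g k η, act (g * k) η = act g (act k η)) : Subgroup G where
  carrier := {g | ∀ η, act g η = η}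
  one_mem' := h1
  mul_mem' := by
    intro a b ha hb η
    rw [hm, hb, ha]
  inv_mem' := by
    intro a ha η
    have h := hm a⁻¹ a η
    rw [inv_mul_cancel, h1, ha] at h
    exact h.symm

instance actKer_normal {G N : Type*} [Group G] {act : G → N → N}
    {h1 : ∀ η, act 1 η = η}
    {hm : ∀ g k η, act (g * k) η = act g (act k η)} :
    (actKer act h1 hm).Normal := by
  constructor
  intro n hn g η
  show act (g * n * g⁻¹) η = η
  rw [hm, hm, hn (act g⁻¹ η), ← hm, mul_inv_cancel, h1]

/-- quotienting `G` by the kernel `K` of the permutation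
representation gives a well-defined faithful action of `G/K` on `N`, and
`(G/K, N)` is a (reduced) skew bracoid. -/
theorem reduced_form_is_skewBracoid {G N : Type*} [Group G] [Group N]
    [Finite G] [Finite N]
    (act : G → N → N) (h : IsSkewBracoid act) :
    ∃ act' : G ⧸ actKer act h.1 h.2.1 → N → N,
      (∀ (g : G) (η : N), act' (QuotientGroup.mk g) η = act g η) ∧
      (∀ x : G ⧸ actKer act h.1 h.2.1, (∀ η, act' x η = η) → x = 1) ∧
      IsSkewBracoid act' := by
  obtain ⟨h1, hm, ht, hb⟩ := h
  set K := actKer act h1 hm with hK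
  have hwd : ∀ a b : G, @Setoid.r _ (QuotientGroup.leftRel K) a b → (fun g η => act g η) a = (fun g η => act g η) b := by
    intro a b hab
    have hab' : a⁻¹ * b ∈ K := QuotientGroup.leftRel_apply.mp hab
    funext η
    have := hm a (a⁻¹ * b) η
    rw [mul_inv_cancel_left, hab' η] at this
    exact this.symm
  refine ⟨fun x => Quotient.liftOn' x (fun g η => act g η) hwd, fun g η => rfl, ?_, ?_, ?_, ?_, ?_⟩
  · intro x hx
    induction x using QuotientGroup.induction_on with
    | H g =>
      have : g ∈ K := hx
      exact (QuotientGroup.eq_one_iff g).mpr this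
  · intro η; exact h1 η
  · intro g k η
    induction g using QuotientGroup.induction_on with
    | H g =>
      induction k using QuotientGroup.induction_on with
      | H k => exact hm g k η
  · intro η μ
    obtain ⟨g, hg⟩ := ht η μ
    exact ⟨QuotientGroup.mk g, hg⟩
  · intro g η μ
    induction g using QuotientGroup.induction_on with
    | H g => exact hb g η μ
end

section
/- Let (G,N) be a skew bracoid with γ-function γ, and let M be a left ideal of (G,N). Define G_M = {g ∈ G : g ⊙ μ ∈ M for all μ ∈ M} and G'_M = {g ∈ G : g ⊙ e_N ∈ M}. Then G_M = G'_M, G_M is a subgroup of G acting transitively on M, and (G_M, M) is a subskew bracoid of (G,N). -/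
/-- for a left ideal `M` of a skew bracoid `(G,N)`,
`G_M = {g | g ⊙ μ ∈ M for all μ ∈ M}` equals `G'_M = {g | g ⊙ e ∈ M}`, it is
a subgroup of `G` which acts on `M`, and this action is transitive, so
`(G_M, M)` is a subskew bracoid of `(G,N)`. -/
theorem left_ideal_gives_subskewBracoid {G N : Type*} [Group G] [Group N]
    [Finite G] [Finite N]
    (act : G → N → N) (h : IsSkewBracoid act)
    (M : Subgroup N)
    (hM : ∀ g : G, (fun η => (act g 1)⁻¹ * act g η) '' (M : Set N) = (M : Set N)) :
    ({g : G | ∀ μ ∈ M, act g μ ∈ M} = {g : G | act g 1 ∈ M}) ∧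
    ∃ H : Subgroup G, (H : Set G) = {g : G | act g 1 ∈ M} ∧
      (∀ g ∈ H, ∀ μ ∈ M, act g μ ∈ M) ∧
      (∀ μ ∈ M, ∀ ν ∈ M, ∃ g ∈ H, act g μ = ν) := by
  obtain ⟨h1, hmul, htrans, hrel⟩ := h
  -- γ(g) maps M into M
  have hγ : ∀ (g : G) (μ : N), μ ∈ M → (act g 1)⁻¹ * act g μ ∈ M := by
    intro g μ hμ
    have : (act g 1)⁻¹ * act g μ ∈ (M : Set N) := by
      rw [← hM g]
      exact Set.mem_image_of_mem _ hμ
    exact this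
  -- if act g 1 ∈ M then act g maps M into M
  have hmap : ∀ g : G, act g 1 ∈ M → ∀ μ ∈ M, act g μ ∈ M := by
    intro g hg μ hμ
    have : act g μ = act g 1 * ((act g 1)⁻¹ * act g μ) := by group
    rw [this]
    exact M.mul_mem hg (hγ g μ hμ)
  have hset : {g : G | ∀ μ ∈ M, act g μ ∈ M} = {g : G | act g 1 ∈ M} := by
    ext g
    constructor
    · intro hg
      exact hg 1 M.one_mem
    · intro hg
      exact hmap g hg
  refine ⟨hset, ?_⟩
  -- inverse closure
  have hinv : ∀ g : G, act g 1 ∈ M → act g⁻¹ 1 ∈ M := by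
    intro g hg
    have hmem : (act g 1)⁻¹ ∈ (M : Set N) := M.inv_mem hg
    rw [← hM g] at hmem
    obtain ⟨m, hm, hm2⟩ := hmem
    have hact : act g m = 1 := by
      have := hm2
      simp only at this
      calc act g m = act g 1 * ((act g 1)⁻¹ * act g m) := by group
        _ = act g 1 * (act g 1)⁻¹ := by rw [this]
        _ = 1 := by group
    have : act g⁻¹ 1 = m := by
      rw [← hact, ← hmul, inv_mul_cancel, h1]
    rw [this]; exact hm
  refine ⟨{ carrier := {g : G | act g 1 ∈ M}
            one_mem' := by simpa [h1] using M.one_mem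
            mul_mem' := by
              intro a b ha hb
              simp only [Set.mem_setOf_eq] at *
              rw [hmul]
              exact hmap a ha _ hb
            inv_mem' := by
              intro a ha
              exact hinv a ha }, rfl, ?_, ?_⟩
  · intro g hg μ hμ
    exact hmap g hg μ hμ
  · intro μ hμ ν hν
    obtain ⟨g, hg⟩ := htrans μ ν
    have hgH : act g 1 ∈ M := by
      have hγμ : (act g 1)⁻¹ * act g μ ∈ M := hγ g μ hμ
      have : act g 1 = ν * ((act g 1)⁻¹ * act g μ)⁻¹ := by rw [← hg]; group
      rw [this]
      exact M.mul_mem hν (M.inv_mem hγμ)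
    exact ⟨g, hgH, hg⟩
end

section
/- Let (G,N) be a skew bracoid and let M be an ideal of (G,N). Then the formula g ⊙ (ηM) = (g ⊙ η)M gives a well-defined transitive action of G on the quotient group N/M, and (G, N/M) is a skew bracoid. -/
/-- if `M` is an ideal of the skew bracoid `(G,N)` (a normal
subgroup of `N` stable under the γ-function) then `g ⊙ (ηM) = (g ⊙ η)M` is a
well-defined transitive action of `G` on `N/M` and `(G, N/M)` is a skew
bracoid. -/
theorem quotient_skewBracoid {G N : Type*} [Group G] [Group N]
    [Finite G] [Finite N]
    (act : G → N → N) (h : IsSkewBracoid act)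
    (M : Subgroup N) [M.Normal]
    (hM : ∀ g : G, (fun η => (act g 1)⁻¹ * act g η) '' (M : Set N) = (M : Set N)) :
    ∃ act' : G → N ⧸ M → N ⧸ M,
      (∀ (g : G) (η : N), act' g (QuotientGroup.mk η) = QuotientGroup.mk (act g η)) ∧
      IsSkewBracoid act' := by
  obtain ⟨h1, hcomp, htrans, hrel⟩ := h
  have hγ : ∀ (g : G) (m : N), m ∈ M → (act g 1)⁻¹ * act g m ∈ M := by
    intro g m hm
    have hmem : (act g 1)⁻¹ * act g m ∈
        (fun η => (act g 1)⁻¹ * act g η) '' (M : Set N) := ⟨m, hm, rfl⟩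
    rwa [hM g] at hmem
  have hresp : ∀ g : G, ∀ η μ : N, @Setoid.r N (QuotientGroup.leftRel M) η μ →
      @Setoid.r N (QuotientGroup.leftRel M) (act g η) (act g μ) := by
    intro g η μ hxy
    rw [QuotientGroup.leftRel_apply] at hxy ⊢
    have hmu : μ = η * (η⁻¹ * μ) := by group
    rw [hmu, hrel]
    have : (act g η)⁻¹ * (act g η * (act g 1)⁻¹ * act g (η⁻¹ * μ)) =
        (act g 1)⁻¹ * act g (η⁻¹ * μ) := by group
    rw [this]
    exact hγ g _ hxy
  refine ⟨fun g => Quotient.map' (act g) (hresp g), fun g η => rfl, ?_, ?_, ?_, ?_⟩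
  · intro η
    induction η using Quotient.inductionOn' with
    | h η => exact congrArg QuotientGroup.mk (h1 η)
  · intro g k η
    induction η using Quotient.inductionOn' with
    | h η => exact congrArg QuotientGroup.mk (hcomp g k η)
  · intro η μ
    induction η using Quotient.inductionOn' with
    | h η =>
      induction μ using Quotient.inductionOn' with
      | h μ =>
        obtain ⟨g, hg⟩ := htrans η μ
        exact ⟨g, congrArg QuotientGroup.mk hg⟩
  · intro g η μ
    induction η using Quotient.inductionOn' with
    | h η =>
      induction μ using Quotient.inductionOn' with
      | h μ =>
        show (QuotientGroup.mk (act g (η * μ)) : N ⧸ M) =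
          QuotientGroup.mk (act g η) * (QuotientGroup.mk (act g 1))⁻¹ *
            QuotientGroup.mk (act g μ)
        rw [hrel]
        rfl
end

section
/- Let φ : (G,N,⊙) → (G',N',⊙') be a homomorphism of skew bracoids, consisting of group homomorphisms φ : G → G' and φ_N : N → N' with φ_N(g ⊙ η) = φ(g) ⊙' φ_N(η) for all g, η. Then ker(φ_N) is an ideal of (G,N): it is a normal subgroup of (N,⋆) and γ(g)(ker φ_N) ⊆ ker φ_N for all g ∈ G. -/
/-- the kernel of the `N`-component of a skew bracoid
homomorphism is an ideal of the domain: a normal subgroup of `(N,⋆)` stable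
under the γ-function. -/
theorem hom_kernel_is_ideal {G N G' N' : Type*}
    [Group G] [Group N] [Group G'] [Group N']
    (act : G → N → N) (act' : G' → N' → N')
    (h : IsSkewBracoid act) (h' : IsSkewBracoid act')
    (φ : G →* G') (ψ : N →* N')
    (hcomp : ∀ (g : G) (η : N), ψ (act g η) = act' (φ g) (ψ η)) :
    ψ.ker.Normal ∧
    ∀ g : G, ∀ η ∈ ψ.ker, (act g 1)⁻¹ * act g η ∈ ψ.ker := by
  refine ⟨MonoidHom.normal_ker ψ, fun g η hη => ?_⟩
  rw [MonoidHom.mem_ker] at hη ⊢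
  rw [map_mul, map_inv, hcomp, hcomp, hη, map_one, inv_mul_cancel]
end

section
/- Let (G,N) be a finite skew bracoid, M an ideal of (G,N), and S = Stab_G(e_N), G_M = {g ∈ G : g ⊙ e_N ∈ M}. If G_M is normal in G (i.e. M is an enhanced ideal), then in the quotient skew bracoid (G, N/M) the kernel of the action equals G_M, and |G/G_M| = |N/M|; hence the reduced form of (G, N/M) is essentially a skew brace. Conversely, if the reduced form of (G, N/M) is essentially a skew brace (its two groups have equal order, equivalently the action of G/ker on N/M is regular), then G_M is normal in G. -/
/-- The induced action of `G` on the quotient `N ⧸ M` of an ideal. -/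
def bracoidAction {G N : Type*} [Group G] [Group N] (act : G → N → N)
    (h : IsSkewBracoid act) (M : Subgroup N)
    (hγ : ∀ g : G, ∀ μ ∈ M, (act g 1)⁻¹ * act g μ ∈ M) :
    MulAction G (N ⧸ M) where
  smul g := Quotient.map' (act g) (fun a b hab => by
    rw [QuotientGroup.leftRel_apply] at hab ⊢
    have hb : act g b = act g a * ((act g 1)⁻¹ * act g (a⁻¹ * b)) := by
      have h2 := h.2.2.2 g a (a⁻¹ * b)
      rw [mul_inv_cancel_left] at h2
      rw [h2, mul_assoc]
    rw [hb, inv_mul_cancel_left]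
    exact hγ g _ hab)
  one_smul x := Quotient.inductionOn' x fun a => by
    show Quotient.map' _ _ _ = _
    rw [Quotient.map'_mk'']
    exact congrArg _ (h.1 a)
  mul_smul g k x := Quotient.inductionOn' x fun a => by
    show Quotient.map' _ _ _ = Quotient.map' _ _ (Quotient.map' _ _ _)
    rw [Quotient.map'_mk'', Quotient.map'_mk'', Quotient.map'_mk'']
    exact congrArg _ (h.2.1 g k a)

/-- let `M` be an ideal of the finite skew bracoid `(G,N)` and
`G_M = {g | g ⊙ e_N ∈ M}`. If `G_M` is normal in `G` (i.e. `M` is an enhanced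
ideal), then the kernel `{g | ∀ η, η⁻¹ ⋆ (g ⊙ η) ∈ M}` of the action of `G`
on `N/M` equals `G_M` and `|G|·|M| = |G_M|·|N|` (i.e. `|G/G_M| = |N/M|`), so
the reduced form of `(G, N/M)` is essentially a skew brace. Conversely, if
the action of `G` modulo its kernel on `N/M` is regular
(`|kernel|·|N| = |G|·|M|`), then `G_M` is normal in `G`. -/
theorem enhanced_ideal_iff_quotient_essentially_skewBrace {G N : Type*}
    [Group G] [Group N] [Finite G] [Finite N]
    (act : G → N → N) (h : IsSkewBracoid act)
    (M : Subgroup N) (hnorm : M.Normal)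
    (hγ : ∀ g : G, (fun η => (act g 1)⁻¹ * act g η) '' (M : Set N) = (M : Set N)) :
    ((∀ g : G, ∀ n ∈ {x : G | act x 1 ∈ M}, g * n * g⁻¹ ∈ {x : G | act x 1 ∈ M}) →
      ({x : G | ∀ η : N, η⁻¹ * act x η ∈ M} = {x : G | act x 1 ∈ M}) ∧
      Nat.card G * Nat.card {n : N // n ∈ M} =
        Nat.card {x : G // act x 1 ∈ M} * Nat.card N) ∧
    ((Nat.card {x : G // ∀ η : N, η⁻¹ * act x η ∈ M} * Nat.card N =
        Nat.card G * Nat.card {n : N // n ∈ M}) →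
      ∀ g : G, ∀ n ∈ {x : G | act x 1 ∈ M}, g * n * g⁻¹ ∈ {x : G | act x 1 ∈ M}) := by
  haveI := hnorm
  -- γ preserves M
  have hγ' : ∀ g : G, ∀ μ ∈ M, (act g 1)⁻¹ * act g μ ∈ M := by
    intro g μ hμ
    have : (fun η => (act g 1)⁻¹ * act g η) μ ∈ (M : Set N) := by
      rw [← hγ g]; exact Set.mem_image_of_mem _ hμ
    exact this
  letI := bracoidAction act h M hγ'
  have hsmul : ∀ (g : G) (η : N),
      g • (QuotientGroup.mk η : N ⧸ M) = QuotientGroup.mk (act g η) := by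
    intro g η
    show Quotient.map' _ _ _ = _
    rw [Quotient.map'_mk'']
  -- the stabilizer of the identity coset is G_M
  have hstab : (MulAction.stabilizer G (1 : N ⧸ M) : Set G) = {x : G | act x 1 ∈ M} := by
    ext g
    simp only [SetLike.mem_coe, MulAction.mem_stabilizer_iff, Set.mem_setOf_eq]
    have h1 : (1 : N ⧸ M) = QuotientGroup.mk (1 : N) := rfl
    rw [h1, hsmul g 1, ← h1]
    exact QuotientGroup.eq_one_iff _
  -- the orbit of the identity coset is everything
  have horb : MulAction.orbit G (1 : N ⧸ M) = Set.univ := by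
    ext x
    simp only [Set.mem_univ, iff_true]
    induction x using Quotient.inductionOn' with
    | h η =>
      obtain ⟨g, hg⟩ := h.2.2.1 1 η
      refine ⟨g, ?_⟩
      show g • (QuotientGroup.mk (1 : N) : N ⧸ M) = _
      rw [hsmul, hg]
  -- counting: |G|·|M| = |G_M|·|N|, unconditionally
  have hcount : Nat.card G * Nat.card {n : N // n ∈ M} =
      Nat.card {x : G // act x 1 ∈ M} * Nat.card N := by
    have hOS := Nat.card_congr (MulAction.orbitProdStabilizerEquivGroup G (1 : N ⧸ M))
    rw [Nat.card_prod] at hOS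
    have horbcard : Nat.card (MulAction.orbit G (1 : N ⧸ M)) = Nat.card (N ⧸ M) := by
      rw [horb]; exact Nat.card_congr (Equiv.Set.univ _)
    have hstabcard : Nat.card (MulAction.stabilizer G (1 : N ⧸ M)) =
        Nat.card {x : G // act x 1 ∈ M} := Nat.card_congr (Equiv.setCongr hstab)
    have hN : Nat.card N = Nat.card (N ⧸ M) * Nat.card M :=
      Subgroup.card_eq_card_quotient_mul_card_subgroup M
    rw [horbcard, hstabcard] at hOS
    calc Nat.card G * Nat.card {n : N // n ∈ M}
        = Nat.card (N ⧸ M) * Nat.card {x : G // act x 1 ∈ M} * Nat.card M := by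
          rw [hOS]
      _ = Nat.card {x : G // act x 1 ∈ M} * (Nat.card (N ⧸ M) * Nat.card M) := by ring
      _ = Nat.card {x : G // act x 1 ∈ M} * Nat.card N := by rw [← hN]
  -- kernel is contained in G_M
  have hKsub : {x : G | ∀ η : N, η⁻¹ * act x η ∈ M} ⊆ {x : G | act x 1 ∈ M} := by
    intro g hg
    have := hg 1
    simpa using this
  constructor
  · -- forward direction
    intro hnormal
    refine ⟨?_, hcount⟩
    apply Set.Subset.antisymm hKsub
    intro g hg η
    obtain ⟨k, hk⟩ := h.2.2.1 1 η
    have hm : act (k⁻¹ * g * k) 1 ∈ M := by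
      have := hnormal k⁻¹ g hg
      rwa [inv_inv] at this
    have h2 : act k (act (k⁻¹ * g * k) 1) = act g η := by
      rw [h.2.1, h.2.1, hk, ← h.2.1, mul_inv_cancel, h.1]
    rw [← h2, ← hk]
    exact hγ' k _ hm
  · -- converse direction
    intro hcard g n hn
    have hNpos : 0 < Nat.card N := Nat.card_pos
    have hcardK : Nat.card {x : G | ∀ η : N, η⁻¹ * act x η ∈ M} =
        Nat.card {x : G | act x 1 ∈ M} := by
      apply Nat.eq_of_mul_eq_mul_right hNpos
      calc Nat.card {x : G | ∀ η : N, η⁻¹ * act x η ∈ M} * Nat.card N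
          = Nat.card G * Nat.card {n : N // n ∈ M} := hcard
        _ = Nat.card {x : G | act x 1 ∈ M} * Nat.card N := hcount
    have hK : {x : G | ∀ η : N, η⁻¹ * act x η ∈ M} = {x : G | act x 1 ∈ M} := by
      apply Set.eq_of_subset_of_ncard_le hKsub _ (Set.toFinite _)
      rw [← Nat.card_coe_set_eq, ← Nat.card_coe_set_eq, hcardK]
    rw [← hK] at hn
    show act (g * n * g⁻¹) 1 ∈ M
    have hgν : act g (act g⁻¹ 1) = 1 := by rw [← h.2.1, mul_inv_cancel, h.1]
    have hν : act n (act g⁻¹ 1) =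
        act g⁻¹ 1 * ((act g⁻¹ 1)⁻¹ * act n (act g⁻¹ 1)) := by group
    have heq : act (g * n * g⁻¹) 1 = act g (act n (act g⁻¹ 1)) := by
      rw [h.2.1, h.2.1]
    rw [heq, hν, h.2.2.2, hgν, one_mul]
    exact hγ' g _ (hn (act g⁻¹ 1))
end

section
/- Let (G,·) be a group, G' a subgroup, X = G/G' the left coset space with G acting by left translation ⊙. Suppose ⋆ is a binary operation on X such that (G,·,X,⋆,⊙) is a skew bracoid. Then the image of the right regular representation ρ_⋆(X) ⊆ Perm(X) (where ρ_⋆(x̄)(ȳ) = ȳ ⋆ x̄⁻¹) is a regular subgroup of Perm(X) that is G-stable: λ_⊙(g) ρ_⋆(x̄) λ_⊙(g)⁻¹ = ρ_⋆(γ(g)(x̄)) for all g ∈ G and x̄ ∈ X, where γ is the γ-function of the skew bracoid. -/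
/-- let `X = G/G'` with `G` acting by left translation `•`, and
suppose a group operation `⋆` on `X` (given here by a `Group (G ⧸ G')`
instance) makes `(G,·,X,⋆,⊙)` a skew bracoid.  Then the image of the right
regular representation `ρ_⋆(x̄) = Equiv.mulRight x̄⁻¹` is a subgroup of
`Perm(X)`, it is regular, and it is `G`-stable with
`λ_⊙(g) ρ_⋆(x̄) λ_⊙(g)⁻¹ = ρ_⋆(γ(g)(x̄))`. -/
theorem rho_star_is_G_stable_regular {G : Type*} [Group G] (G' : Subgroup G)
    [Group (G ⧸ G')]
    (hbr : IsSkewBracoid (fun (g : G) (x : G ⧸ G') => g • x)) :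
    (∃ P : Subgroup (Equiv.Perm (G ⧸ G')),
      (P : Set (Equiv.Perm (G ⧸ G'))) =
        Set.range (fun x : G ⧸ G' => (Equiv.mulRight x⁻¹ : Equiv.Perm (G ⧸ G')))) ∧
    (∀ x y : G ⧸ G', ∃! z : G ⧸ G', (Equiv.mulRight z⁻¹ : Equiv.Perm (G ⧸ G')) y = x) ∧
    (∀ (g : G) (x : G ⧸ G'),
      (MulAction.toPerm g : Equiv.Perm (G ⧸ G')) * Equiv.mulRight x⁻¹ *
          (MulAction.toPerm g : Equiv.Perm (G ⧸ G'))⁻¹ =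
        Equiv.mulRight ((g • (1 : G ⧸ G'))⁻¹ * g • x)⁻¹) := by
  obtain ⟨h1, h2, h3, h4⟩ := hbr
  refine ⟨?_, ?_, ?_⟩
  · refine ⟨{ carrier := Set.range fun x : G ⧸ G' => (Equiv.mulRight x⁻¹ : Equiv.Perm (G ⧸ G'))
              mul_mem' := ?_
              one_mem' := ⟨1, by ext y; simp⟩
              inv_mem' := ?_ }, rfl⟩
    · rintro _ _ ⟨a, rfl⟩ ⟨b, rfl⟩
      exact ⟨a * b, by ext y; simp [mul_assoc]⟩
    · rintro _ ⟨a, rfl⟩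
      exact ⟨a⁻¹, by ext y; simp⟩
  · intro x y
    refine ⟨x⁻¹ * y, by simp [mul_assoc], ?_⟩
    intro z hz
    simp only [Equiv.coe_mulRight] at hz
    have : z⁻¹ = y⁻¹ * x := by rw [← hz]; group
    calc z = (z⁻¹)⁻¹ := by group
    _ = (y⁻¹ * x)⁻¹ := by rw [this]
    _ = x⁻¹ * y := by group
  · intro g x
    have key : (g • (1 : G ⧸ G')) * (g • x)⁻¹ * (g • (1 : G ⧸ G')) = (g • x⁻¹ : G ⧸ G') := by
      have h := h4 g x x⁻¹
      simp only [mul_inv_cancel] at h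
      have h2 := congrArg (fun t => (g • (1 : G ⧸ G')) * (g • x)⁻¹ * t) h
      rw [h2]; group
    ext y
    have h := h4 g (g⁻¹ • y) x⁻¹
    simp only at h
    simp only [Equiv.Perm.coe_mul, Function.comp_apply, Equiv.coe_mulRight,
      MulAction.toPerm_apply]
    have hinv : ((MulAction.toPerm g : Equiv.Perm (G ⧸ G'))⁻¹) y = g⁻¹ • y := rfl
    rw [hinv, h, smul_inv_smul, ← key]
    group
end
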